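/- There exists a finite-rank operator K on ℓ²(ℕ×V₂, m^c), mapping finitely supported functions to finitely supported functions, such that for every finitely supported f : ℕ×V₂ → ℂ: Δ_{G^c}(i A_{G^c} f) − i A_{G^c}(Δ_{G^c} f) = (m₂/2)·(B − (α/m₂))·((β/m₂)·Id − B)·(1 ⊗ P^le) f + K f, where B is the bounded operator on ℓ²(ℕ×V₂, m^c) given by (B f)(x,y) = (1/m₂)·(Δ_{G₁^c} f(·,y))(x) and (1 ⊗ P^le) applies P^le in the second variable. In particular the commutator [Δ_{G^c}, i A_{G^c}], defined on finitely supported functions, extends to a bounded operator on ℓ²(ℕ×V₂, m^c). -/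

import Mathlib

noncomputable section

open Complex
open scoped Classical

/-- The Laplacian of the weighted graph `(E, V, m)`. -/
def lap {V : Type*} (E : V → V → ℝ) (m : V → ℝ) (f : V → ℂ) : V → ℂ :=
  fun x => (1 / (m x : ℂ)) * ∑' y : V, ((E x y : ℝ) : ℂ) * (f x - f y)

/-- Edge weights of the cusp half-line: `E₁^c(n, n+1) = e^{−(2n+1)/2}`. -/
def e1C : ℕ → ℕ → ℝ := fun n k =>
  if k = n + 1 then Real.exp (-((2 * (n : ℝ) + 1) / 2))
  else if n = k + 1 then Real.exp (-((2 * (k : ℝ) + 1) / 2)) else 0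

/-- Weight of the cusp half-line: `m₁^c(n) = e^{−n}`. -/
def m1C : ℕ → ℝ := fun n => Real.exp (-(n : ℝ))

/-- Weight of the cusp: `m^c(x,y) = e^{−x}·m₂`. -/
def mC (V₂ : Type*) (m₂ : ℝ) : ℕ × V₂ → ℝ := fun v => m1C v.1 * m₂

/-- Edge weights of the cusp. -/
def eC {V₂ : Type*} (E₂ : V₂ → V₂ → ℝ) : ℕ × V₂ → ℕ × V₂ → ℝ := fun v w =>
  e1C v.1 w.1 * (if v.2 = w.2 then 1 else 0) + (if v.1 = w.1 then 1 else 0) * E₂ v.2 w.2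

/-- The Laplacian of the finite graph `G₂`. -/
def lap2 {V₂ : Type*} [Fintype V₂] (m₂ : ℝ) (E₂ : V₂ → V₂ → ℝ)
    (g : V₂ → ℂ) : V₂ → ℂ := fun y =>
  (1 / (m₂ : ℂ)) * ∑ y' : V₂, ((E₂ y y' : ℝ) : ℂ) * (g y - g y')

/-- `Δ_{G₂}` as a linear endomorphism of `ℓ²(V₂, m₂)` (realized on
`EuclideanSpace ℂ V₂`; since `m₂` is a constant weight, the Hilbert space
`ℓ²(V₂, m₂)` has the same orthogonality relations). -/
def lap2LM {V₂ : Type*} [Fintype V₂] (m₂ : ℝ) (E₂ : V₂ → V₂ → ℝ) :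
    EuclideanSpace ℂ V₂ →ₗ[ℂ] EuclideanSpace ℂ V₂ where
  toFun g := (WithLp.equiv 2 _).symm (lap2 m₂ E₂ ((WithLp.equiv 2 _) g))
  map_add' := by
    intro a b
    ext y
    simp only [WithLp.equiv_symm_apply, WithLp.equiv_apply, lap2, PiLp.add_apply, PiLp.toLp_apply]
    have h : ∑ y' : V₂, ((E₂ y y' : ℝ) : ℂ) * ((a y + b y) - (a y' + b y'))
        = (∑ y' : V₂, ((E₂ y y' : ℝ) : ℂ) * (a y - a y'))
          + ∑ y' : V₂, ((E₂ y y' : ℝ) : ℂ) * (b y - b y') := by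
      rw [← Finset.sum_add_distrib]
      exact Finset.sum_congr rfl fun y' _ => by ring
    rw [h]
    ring
  map_smul' := by
    intro c a
    ext y
    simp only [WithLp.equiv_symm_apply, WithLp.equiv_apply, lap2, PiLp.smul_apply, PiLp.toLp_apply,
      smul_eq_mul, RingHom.id_apply]
    have h : ∑ y' : V₂, ((E₂ y y' : ℝ) : ℂ) * ((c * a y) - (c * a y'))
        = c * ∑ y' : V₂, ((E₂ y y' : ℝ) : ℂ) * (a y - a y') := by
      rw [Finset.mul_sum]
      exact Finset.sum_congr rfl fun y' _ => by ring
    rw [h]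
    ring

/-- `P^le`: the orthogonal projection of `ℓ²(V₂, m₂)` onto `ker Δ_{G₂}`. -/
def Ple {V₂ : Type*} [Fintype V₂] (m₂ : ℝ) (E₂ : V₂ → V₂ → ℝ)
    (g : V₂ → ℂ) : V₂ → ℂ :=
  (WithLp.equiv 2 _)
    ((Submodule.orthogonalProjectionOnto (LinearMap.ker (lap2LM m₂ E₂))
      ((WithLp.equiv 2 _).symm g) : EuclideanSpace ℂ V₂))

/-- `(A_{m₁} f)(n) = (i/2)·(e^{1/2}(n−1/2)·f(n−1) − e^{−1/2}(n+1/2)·f(n+1))`,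
with `f(−1) = 0`. -/
def aM1 (f : ℕ → ℂ) : ℕ → ℂ := fun n =>
  (I / 2) * (((Real.exp (1 / 2) : ℝ) : ℂ) * ((n : ℂ) - 1 / 2)
      * (if n = 0 then 0 else f (n - 1))
    - ((Real.exp (-(1 / 2)) : ℝ) : ℂ) * ((n : ℂ) + 1 / 2) * f (n + 1))

/-- `A_{G^c} := A_{m₁} ⊗ P^le`. -/
def aGC {V₂ : Type*} [Fintype V₂] (m₂ : ℝ) (E₂ : V₂ → V₂ → ℝ)
    (f : ℕ × V₂ → ℂ) : ℕ × V₂ → ℂ := fun v =>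
  aM1 (fun n => Ple m₂ E₂ (fun y' => f (n, y')) v.2) v.1

/-- `(B f)(x,y) = (1/m₂)·(Δ_{G₁^c} f(·,y))(x)`. -/
def Bop {V₂ : Type*} (m₂ : ℝ) (f : ℕ × V₂ → ℂ) : ℕ × V₂ → ℂ := fun v =>
  (1 / (m₂ : ℂ)) * lap e1C m1C (fun n => f (n, v.2)) v.1

/-- `(1 ⊗ P^le) f`: `P^le` applied in the second variable. -/
def PleT {V₂ : Type*} [Fintype V₂] (m₂ : ℝ) (E₂ : V₂ → V₂ → ℝ)
    (f : ℕ × V₂ → ℂ) : ℕ × V₂ → ℂ := fun v =>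
  Ple m₂ E₂ (fun y' => f (v.1, y')) v.2

/-- `α := e^{1/2} + e^{−1/2} − 2`. -/
def alphaC : ℝ := Real.exp (1 / 2) + Real.exp (-(1 / 2)) - 2

/-- `β := e^{1/2} + e^{−1/2} + 2`. -/
def betaC : ℝ := Real.exp (1 / 2) + Real.exp (-(1 / 2)) + 2

/-- The ℓ²-norm with weight `m`. -/
def nrm {V : Type*} (m : V → ℝ) (f : V → ℂ) : ℝ :=
  Real.sqrt (∑' x : V, m x * ‖f x‖ ^ 2)

/-!
Both operators act fibrewise over `V₂`: `Δ_{G^c} = m₂⁻¹ Δ₁ ⊗ 1 + e^{x} ⊗ Δ_{G₂}` and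
`A_{G^c} = A_{m₁} ⊗ P^le`, where `P^le Δ_{G₂} = Δ_{G₂} P^le = 0` because `Δ_{G₂}` is symmetric.
Hence `[Δ_{G^c}, i A_{G^c}] = m₂⁻¹ T ⊗ P^le` with `T = [Δ₁, i A_{m₁}]` on the half-line.
Computing stencils, `(T G)(n) = G(n) − (e/2) G(n−2) − (e⁻¹/2) G(n+2)` for `n ≥ 2`, and the same
holds for `Q = ½ (Δ₁ − α)(β − Δ₁)`; so `T − Q` only lives on `{0, 1}` and gives the finite-rank
`K`. For boundedness, `T` has band width `2` and coefficients at most `e`, while the weight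
`e^{-n}` varies by at most `e²` across a band, whence `‖[Δ_{G^c}, i A_{G^c}] f‖ ≤ 5e²/m₂ ‖f‖`.
-/

namespace Cusp

def cA : ℂ := (Real.exp (1 / 2) : ℂ)

def cB : ℂ := (Real.exp (-(1 / 2)) : ℂ)

lemma cA_mul_cB : cA * cB = 1 := by
  rw [cA, cB, ← Complex.ofReal_mul, ← Real.exp_add]; norm_num

lemma cA_sq : cA ^ 2 = (Real.exp 1 : ℂ) := by
  rw [cA, ← Complex.ofReal_pow, ← Real.exp_nat_mul]; norm_num

lemma cB_sq : cB ^ 2 = (Real.exp (-1) : ℂ) := by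
  rw [cB, ← Complex.ofReal_pow, ← Real.exp_nat_mul]; norm_num

def lapHalf : (ℕ → ℂ) →ₗ[ℂ] (ℕ → ℂ) where
  toFun G
    | 0 => cB * (G 0 - G 1)
    | n + 1 => cA * (G (n + 1) - G n) + cB * (G (n + 1) - G (n + 2))
  map_add' G H := by ext (_ | n) <;> simp only [Pi.add_apply] <;> ring
  map_smul' c G := by
    ext (_ | n) <;> simp only [Pi.smul_apply, smul_eq_mul, RingHom.id_apply] <;> ring

lemma lapHalf_zero (G : ℕ → ℂ) : lapHalf G 0 = cB * (G 0 - G 1) := rfl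

lemma lapHalf_succ (G : ℕ → ℂ) (n : ℕ) :
    lapHalf G (n + 1) = cA * (G (n + 1) - G n) + cB * (G (n + 1) - G (n + 2)) := rfl

lemma lap_eq_sum {V : Type*} (E : V → V → ℝ) (m : V → ℝ) (f : V → ℂ) (x : V) (s : Finset V)
    (hs : ∀ y ∉ s, E x y = 0) :
    lap E m f x = 1 / (m x : ℂ) * ∑ y ∈ s, (E x y : ℂ) * (f x - f y) := by
  rw [lap, tsum_eq_sum fun y hy ↦ by simp [hs y hy]]

lemma e1C_eq_zero {n k : ℕ} (h₁ : k ≠ n + 1) (h₂ : n ≠ k + 1) : e1C n k = 0 := by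
  simp [e1C, h₁, h₂]

lemma lap_e1C_m1C (G : ℕ → ℂ) : lap e1C m1C G = lapHalf G := by
  ext (_ | n)
  · rw [lap_eq_sum _ _ _ _ {1} fun k hk ↦ e1C_eq_zero (by simpa using hk) (by omega)]
    simp [e1C, m1C, lapHalf_zero, cB]
  · rw [lap_eq_sum _ _ _ _ {n, n + 2} fun k hk ↦ by
        simp only [Finset.mem_insert, Finset.mem_singleton, not_or] at hk
        exact e1C_eq_zero (by omega) (by omega),
      Finset.sum_pair (by omega), lapHalf_succ]
    have hlow : e1C (n + 1) n = Real.exp (-(n + 1 : ℝ)) * Real.exp (1 / 2) := by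
      rw [e1C, if_neg (by omega), if_pos rfl, ← Real.exp_add]; congr 1; ring
    have hup : e1C (n + 1) (n + 2) = Real.exp (-(n + 1 : ℝ)) * Real.exp (-(1 / 2)) := by
      rw [e1C, if_pos rfl, ← Real.exp_add]; push_cast; congr 1; ring
    have hm : m1C (n + 1) = Real.exp (-(n + 1 : ℝ)) := by simp [m1C]
    rw [hlow, hup, hm, cA, cB]
    have : (Real.exp (-(n + 1 : ℝ)) : ℂ) ≠ 0 := by exact_mod_cast (Real.exp_pos _).ne'
    push_cast
    field_simp

def aHalf : (ℕ → ℂ) →ₗ[ℂ] (ℕ → ℂ) where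
  toFun := aM1
  map_add' G H := by ext n; simp only [aM1, Pi.add_apply]; split_ifs <;> ring
  map_smul' c G := by
    ext n; simp only [aM1, Pi.smul_apply, smul_eq_mul, RingHom.id_apply]; split_ifs <;> ring

def iaHalf : (ℕ → ℂ) →ₗ[ℂ] (ℕ → ℂ) := I • aHalf

lemma iaHalf_zero (G : ℕ → ℂ) : iaHalf G 0 = cB / 4 * G 1 := by
  simp only [iaHalf, aHalf, aM1, cB, LinearMap.smul_apply, LinearMap.coe_mk, AddHom.coe_mk,
    Pi.smul_apply, smul_eq_mul, if_pos, Nat.cast_zero, zero_add]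
  linear_combination (-(Real.exp (-(1 / 2)) : ℂ) / 4 * G 1) * I_mul_I

lemma iaHalf_succ (G : ℕ → ℂ) (n : ℕ) :
    iaHalf G (n + 1) = -(1 / 2) * (cA * (n + 1 / 2) * G n - cB * (n + 3 / 2) * G (n + 2)) := by
  simp only [iaHalf, aHalf, aM1, cA, cB, LinearMap.smul_apply, LinearMap.coe_mk, AddHom.coe_mk,
    Pi.smul_apply, smul_eq_mul, Nat.add_one_ne_zero, if_false, Nat.add_sub_cancel, Nat.cast_add,
    Nat.cast_one]
  linear_combination (1 / 2 * ((Real.exp (1 / 2) : ℂ) * (n + 1 / 2) * G n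
    - (Real.exp (-(1 / 2)) : ℂ) * (n + 3 / 2) * G (n + 2))) * I_mul_I

def commHalf : (ℕ → ℂ) →ₗ[ℂ] (ℕ → ℂ) := lapHalf ∘ₗ iaHalf - iaHalf ∘ₗ lapHalf

-- `Q = ½ (Δ₁ − α)(β − Δ₁)`, multiplied out.
def quadHalf : (ℕ → ℂ) →ₗ[ℂ] (ℕ → ℂ) :=
  (1 / 2 : ℂ) • (((alphaC + betaC : ℝ) : ℂ) • lapHalf - lapHalf ∘ₗ lapHalf
    - ((alphaC * betaC : ℝ) : ℂ) • LinearMap.id)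

lemma commHalf_apply (G : ℕ → ℂ) (n : ℕ) :
    commHalf G n = lapHalf (iaHalf G) n - iaHalf (lapHalf G) n := rfl

lemma commHalf_zero (G : ℕ → ℂ) :
    commHalf G 0 = 1 / 2 * G 0 - 1 / 4 * G 1 - (Real.exp (-1) : ℂ) / 2 * G 2 := by
  simp only [commHalf_apply, lapHalf_zero, lapHalf_succ, iaHalf_zero, iaHalf_succ, ← cB_sq]
  push_cast
  linear_combination (1 / 2 * G 0 - 1 / 4 * G 1) * cA_mul_cB

lemma commHalf_one (G : ℕ → ℂ) :
    commHalf G 1 = G 1 - (Real.exp 1 : ℂ) / 4 * G 0 - (Real.exp (-1) : ℂ) / 2 * G 3 := by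
  simp only [commHalf_apply, lapHalf_zero, lapHalf_succ, iaHalf_zero, iaHalf_succ, ← cA_sq,
    ← cB_sq]
  push_cast
  linear_combination (G 1) * cA_mul_cB

lemma commHalf_add_two (G : ℕ → ℂ) (n : ℕ) :
    commHalf G (n + 2) = G (n + 2) - (Real.exp 1 : ℂ) / 2 * G n
      - (Real.exp (-1) : ℂ) / 2 * G (n + 4) := by
  simp only [commHalf_apply, lapHalf_succ, iaHalf_succ, ← cA_sq, ← cB_sq]
  push_cast
  linear_combination (G (n + 2)) * cA_mul_cB

lemma quadHalf_add_two (G : ℕ → ℂ) (n : ℕ) :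
    quadHalf G (n + 2) = G (n + 2) - (Real.exp 1 : ℂ) / 2 * G n
      - (Real.exp (-1) : ℂ) / 2 * G (n + 4) := by
  have hα : ((alphaC + betaC : ℝ) : ℂ) = 2 * (cA + cB) := by
    simp only [alphaC, betaC, cA, cB]; push_cast; ring
  have hβ : ((alphaC * betaC : ℝ) : ℂ) = (cA + cB) ^ 2 - 4 := by
    simp only [alphaC, betaC, cA, cB]; push_cast; ring
  simp only [quadHalf, LinearMap.smul_apply, LinearMap.sub_apply, LinearMap.comp_apply,
    LinearMap.id_apply, Pi.smul_apply, Pi.sub_apply, smul_eq_mul, hα, hβ, lapHalf_succ, ← cA_sq,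
    ← cB_sq]
  linear_combination (-G (n + 2)) * cA_mul_cB

lemma commHalf_add_two_eq_quadHalf (G : ℕ → ℂ) (n : ℕ) :
    commHalf G (n + 2) = quadHalf G (n + 2) := by
  rw [commHalf_add_two, quadHalf_add_two]

lemma norm_sub_sub_le_mul_sum {s : Finset ℕ} {i j k : ℕ} (hij : i ≠ j) (hik : i ≠ k)
    (hjk : j ≠ k) (hs : {i, j, k} ⊆ s) {C : ℝ} {a b c : ℂ} (ha : ‖a‖ ≤ C) (hb : ‖b‖ ≤ C)
    (hc : ‖c‖ ≤ C) (G : ℕ → ℂ) :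
    ‖a * G i - b * G j - c * G k‖ ≤ C * ∑ l ∈ s, ‖G l‖ := by
  have hsum : ‖G i‖ + ‖G j‖ + ‖G k‖ ≤ ∑ l ∈ s, ‖G l‖ := by
    refine le_trans (le_of_eq ?_)
      (Finset.sum_le_sum_of_subset_of_nonneg hs fun _ _ _ ↦ norm_nonneg _)
    rw [Finset.sum_insert (by simp [hij, hik]), Finset.sum_pair hjk, add_assoc]
  calc ‖a * G i - b * G j - c * G k‖ ≤ ‖a‖ * ‖G i‖ + ‖b‖ * ‖G j‖ + ‖c‖ * ‖G k‖ := by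
        refine (norm_sub_le _ _).trans (add_le_add ((norm_sub_le _ _).trans ?_) ?_) <;>
          simp
    _ ≤ C * (‖G i‖ + ‖G j‖ + ‖G k‖) := by
        nlinarith [norm_nonneg (G i), norm_nonneg (G j), norm_nonneg (G k)]
    _ ≤ C * ∑ l ∈ s, ‖G l‖ :=
        mul_le_mul_of_nonneg_left hsum ((norm_nonneg a).trans ha)

lemma norm_commHalf_le (G : ℕ → ℂ) (n : ℕ) :
    ‖commHalf G n‖ ≤ Real.exp 1 * ∑ k ∈ Finset.Icc (n - 2) (n + 2), ‖G k‖ := by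
  have he : (1 : ℝ) ≤ Real.exp 1 := Real.one_le_exp zero_le_one
  have he' : Real.exp (-1) ≤ 1 := Real.exp_le_one_iff.mpr (by norm_num)
  have hpos := Real.exp_pos 1
  have hexp : ∀ x : ℝ, ∀ d : ℂ, ‖(Real.exp x : ℂ) / d‖ = Real.exp x / ‖d‖ := fun x d ↦ by
    rw [norm_div, Complex.norm_real, Real.norm_of_nonneg (Real.exp_pos x).le]
  rcases n with _ | _ | n
  · rw [commHalf_zero]
    refine norm_sub_sub_le_mul_sum (by decide) (by decide) (by decide) (by decide) ?_ ?_ ?_ G <;>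
      (try rw [hexp]) <;> norm_num <;> linarith
  · rw [commHalf_one, ← one_mul (G 1)]
    refine norm_sub_sub_le_mul_sum (by decide) (by decide) (by decide) (by decide) ?_ ?_ ?_ G <;>
      (try rw [hexp]) <;> norm_num <;> linarith
  · rw [commHalf_add_two, ← one_mul (G (n + 2))]
    refine norm_sub_sub_le_mul_sum (by omega) (by omega) (by omega) ?_ ?_ ?_ ?_ G
    · intro l; simp only [Finset.mem_insert, Finset.mem_singleton, Finset.mem_Icc]; omega
    all_goals (try rw [hexp]); norm_num <;> linarith

lemma sum_range_exp_neg_mul_sum_Icc_le (w : ℕ → ℝ) (hw : ∀ k, 0 ≤ w k) (R : ℕ) :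
    ∑ n ∈ Finset.range R, Real.exp (-n) * ∑ k ∈ Finset.Icc (n - 2) (n + 2), w k
      ≤ 5 * Real.exp 2 * ∑ k ∈ Finset.range (R + 2), Real.exp (-k) * w k := by
  -- Each `k` lies in at most five windows `Icc (n - 2) (n + 2)`, on which `e^{-n} ≤ e² e^{-k}`.
  simp_rw [Finset.mul_sum]
  rw [Finset.sum_comm' (t' := Finset.range (R + 2))
    (s' := fun k ↦ (Finset.Icc (k - 2) (k + 2)).filter (· < R))]
  swap
  · intro n k; simp only [Finset.mem_range, Finset.mem_Icc, Finset.mem_filter]; omega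
  refine Finset.sum_le_sum fun k _ ↦ ?_
  calc ∑ n ∈ (Finset.Icc (k - 2) (k + 2)).filter (· < R), Real.exp (-n) * w k
      ≤ ∑ n ∈ (Finset.Icc (k - 2) (k + 2)).filter (· < R), Real.exp 2 * Real.exp (-k) * w k := by
        refine Finset.sum_le_sum fun n hn ↦ mul_le_mul_of_nonneg_right ?_ (hw k)
        simp only [Finset.mem_filter, Finset.mem_Icc] at hn
        rw [← Real.exp_add, Real.exp_le_exp]
        have : (k : ℝ) ≤ n + 2 := by exact_mod_cast (by omega : k ≤ n + 2)
        linarith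
    _ ≤ 5 * (Real.exp 2 * Real.exp (-k) * w k) := by
        rw [Finset.sum_const, nsmul_eq_mul]
        refine mul_le_mul_of_nonneg_right ?_ (mul_nonneg (by positivity) (hw k))
        have := (Finset.card_filter_le (Finset.Icc (k - 2) (k + 2)) (· < R)).trans
          (Nat.card_Icc _ _).le
        exact_mod_cast this.trans (by omega)
    _ = 5 * Real.exp 2 * (Real.exp (-k) * w k) := by ring

lemma sq_norm_commHalf_le (G : ℕ → ℂ) (n : ℕ) :
    ‖commHalf G n‖ ^ 2 ≤ 5 * Real.exp 2 * ∑ k ∈ Finset.Icc (n - 2) (n + 2), ‖G k‖ ^ 2 := by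
  have hcard : ((Finset.Icc (n - 2) (n + 2)).card : ℝ) ≤ 5 := by
    rw [Nat.card_Icc]; exact_mod_cast (by omega)
  calc ‖commHalf G n‖ ^ 2 ≤ (Real.exp 1 * ∑ k ∈ Finset.Icc (n - 2) (n + 2), ‖G k‖) ^ 2 :=
        pow_le_pow_left₀ (norm_nonneg _) (norm_commHalf_le G n) 2
    _ = Real.exp 2 * (∑ k ∈ Finset.Icc (n - 2) (n + 2), ‖G k‖) ^ 2 := by
        rw [mul_pow, ← Real.exp_nat_mul]; norm_num
    _ ≤ Real.exp 2 * (5 * ∑ k ∈ Finset.Icc (n - 2) (n + 2), ‖G k‖ ^ 2) := by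
        gcongr
        exact (sq_sum_le_card_mul_sum_sq).trans
          (mul_le_mul_of_nonneg_right hcard (Finset.sum_nonneg fun _ _ ↦ sq_nonneg _))
    _ = _ := by ring

section ProductGraph

variable {V₂ : Type*} [Fintype V₂] (m₂ : ℝ) (E₂ : V₂ → V₂ → ℝ)

lemma lap_eC (f : ℕ × V₂ → ℂ) (n : ℕ) (y : V₂) :
    lap (eC E₂) (mC V₂ m₂) f (n, y) = 1 / (m₂ : ℂ) * lapHalf (fun k ↦ f (k, y)) n
      + 1 / (m1C n : ℂ) * lap2 m₂ E₂ (fun y' ↦ f (n, y')) y := by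
  have he1C : ∀ k ∉ Finset.range (n + 2), e1C n k = 0 := fun k hk ↦ by
    simp only [Finset.mem_range, not_lt] at hk; exact e1C_eq_zero (by omega) (by omega)
  rw [← lap_e1C_m1C, lap_eq_sum _ _ _ _ _ he1C,
    lap_eq_sum _ _ _ _ (Finset.range (n + 2) ×ˢ Finset.univ) fun v hv ↦ by
      simp only [Finset.mem_product, Finset.mem_univ, and_true] at hv
      have : n ≠ v.1 := by simp only [Finset.mem_range] at hv; omega
      simp [eC, he1C _ hv, this],
    Finset.sum_product]
  have hterm : ∀ k y', ((eC E₂ (n, y) (k, y') : ℝ) : ℂ) * (f (n, y) - f (k, y'))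
      = (if y = y' then (e1C n k : ℂ) * (f (n, y) - f (k, y)) else 0)
        + (if n = k then (E₂ y y' : ℂ) * (f (n, y) - f (n, y')) else 0) := by
    intro k y'
    simp only [eC]
    split_ifs <;> subst_vars <;> push_cast <;> ring
  simp only [hterm, Finset.sum_add_distrib, Finset.sum_ite_eq, Finset.mem_univ, if_true,
    Finset.sum_ite_irrel, Finset.sum_const_zero,
    if_pos (show n ∈ Finset.range (n + 2) by simp)]
  simp only [mC, lap2]
  push_cast
  ring

end ProductGraph

section Projection

variable {V₂ : Type*} [Fintype V₂] (m₂ : ℝ) (E₂ : V₂ → V₂ → ℝ)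

lemma lap2LM_isSymmetric (hsym : ∀ y y', E₂ y y' = E₂ y' y) : (lap2LM m₂ E₂).IsSymmetric := by
  let M : Matrix V₂ V₂ ℂ := Matrix.of fun y y' ↦
    1 / (m₂ : ℂ) * ((if y = y' then ∑ z, (E₂ y z : ℂ) else 0) - E₂ y y')
  have hM : lap2LM m₂ E₂ = Matrix.toEuclideanLin M := by
    ext g y
    simp only [lap2LM, lap2, Matrix.toLpLin_apply, Matrix.mulVec, dotProduct, M, Matrix.of_apply,
      LinearMap.coe_mk, AddHom.coe_mk, WithLp.equiv_symm_apply, WithLp.equiv_apply,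
      PiLp.toLp_apply]
    simp only [mul_sub, sub_mul, mul_ite, mul_zero, ite_mul, zero_mul, Finset.sum_sub_distrib,
      Finset.sum_ite_eq, Finset.mem_univ, if_true, Finset.mul_sum, Finset.sum_mul]
    congr 1 <;> exact Finset.sum_congr rfl fun _ _ ↦ by ring
  rw [hM, Matrix.isSymmetric_toEuclideanLin_iff]
  ext y y'
  rcases eq_or_ne y y' with rfl | h
  · simp [M, Complex.conj_ofReal]
  · simp [M, h, h.symm, Complex.conj_ofReal, hsym y' y]

def lap2ₗ : (V₂ → ℂ) →ₗ[ℂ] (V₂ → ℂ) := (WithLp.linearEquiv 2 ℂ (V₂ → ℂ)).conj (lap2LM m₂ E₂)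

def pleₗ : (V₂ → ℂ) →ₗ[ℂ] (V₂ → ℂ) :=
  (WithLp.linearEquiv 2 ℂ (V₂ → ℂ)).conj (LinearMap.ker (lap2LM m₂ E₂)).starProjection.toLinearMap

lemma coe_lap2ₗ : ⇑(lap2ₗ m₂ E₂) = lap2 m₂ E₂ := rfl

lemma coe_pleₗ : ⇑(pleₗ m₂ E₂) = Ple m₂ E₂ := rfl

lemma lap2_Ple (g : V₂ → ℂ) : lap2 m₂ E₂ (Ple m₂ E₂ g) = 0 :=
  congrArg WithLp.ofLp (LinearMap.mem_ker.mp
    ((LinearMap.ker (lap2LM m₂ E₂)).starProjection_apply_mem (WithLp.toLp 2 g)))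

lemma Ple_lap2 (hsym : ∀ y y', E₂ y y' = E₂ y' y) (g : V₂ → ℂ) :
    Ple m₂ E₂ (lap2 m₂ E₂ g) = 0 := by
  have hmem : WithLp.toLp 2 (lap2 m₂ E₂ g) ∈ (LinearMap.ker (lap2LM m₂ E₂))ᗮ := by
    rw [← (lap2LM_isSymmetric m₂ E₂ hsym).orthogonal_range]
    exact Submodule.le_orthogonal_orthogonal _ (LinearMap.mem_range_self _ _)
  exact congrArg WithLp.ofLp ((Submodule.starProjection_apply_eq_zero_iff _).mpr hmem)

lemma sum_norm_sq_Ple_le (g : V₂ → ℂ) : ∑ y, ‖Ple m₂ E₂ g y‖ ^ 2 ≤ ∑ y, ‖g y‖ ^ 2 := by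
  have h := (LinearMap.ker (lap2LM m₂ E₂)).norm_starProjection_apply_le (WithLp.toLp 2 g)
  rw [← sq_le_sq₀ (norm_nonneg _) (norm_nonneg _), EuclideanSpace.norm_sq_eq,
    EuclideanSpace.norm_sq_eq] at h
  exact h

end Projection

section Fibers

variable {V₂ : Type*} (L : (V₂ → ℂ) →ₗ[ℂ] (V₂ → ℂ)) (f : ℕ × V₂ → ℂ)

lemma map_fiber_lapHalf (n : ℕ) :
    L (fun y' ↦ lapHalf (fun k ↦ f (k, y')) n)
      = fun y ↦ lapHalf (fun k ↦ L (fun y' ↦ f (k, y')) y) n := by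
  rcases n with _ | n
  · have h : (fun y' ↦ lapHalf (fun k ↦ f (k, y')) 0)
        = cB • ((fun y' ↦ f (0, y')) - fun y' ↦ f (1, y')) := by
      ext; simp [lapHalf_zero]
    rw [h]; ext y; simp [lapHalf_zero]
  · have h : (fun y' ↦ lapHalf (fun k ↦ f (k, y')) (n + 1))
        = cA • ((fun y' ↦ f (n + 1, y')) - fun y' ↦ f (n, y'))
          + cB • ((fun y' ↦ f (n + 1, y')) - fun y' ↦ f (n + 2, y')) := by
      ext; simp [lapHalf_succ]
    rw [h]; ext y; simp [lapHalf_succ]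

lemma map_fiber_iaHalf (n : ℕ) :
    L (fun y' ↦ iaHalf (fun k ↦ f (k, y')) n)
      = fun y ↦ iaHalf (fun k ↦ L (fun y' ↦ f (k, y')) y) n := by
  rcases n with _ | n
  · have h : (fun y' ↦ iaHalf (fun k ↦ f (k, y')) 0) = (cB / 4) • fun y' ↦ f (1, y') := by
      ext; simp [iaHalf_zero]
    rw [h]; ext y; simp [iaHalf_zero]
  · have h : (fun y' ↦ iaHalf (fun k ↦ f (k, y')) (n + 1))
        = (-(1 / 2) * cA * (n + 1 / 2)) • (fun y' ↦ f (n, y'))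
          + (1 / 2 * cB * (n + 3 / 2)) • fun y' ↦ f (n + 2, y') := by
      ext; simp only [iaHalf_succ, Pi.add_apply, Pi.smul_apply, smul_eq_mul]; ring
    rw [h]; ext y; simp only [iaHalf_succ, map_add, map_smul, Pi.add_apply, Pi.smul_apply,
      smul_eq_mul]; ring

end Fibers

section Commutator

variable {V₂ : Type*} [Fintype V₂] (m₂ : ℝ) (E₂ : V₂ → V₂ → ℝ)

def cuspComm (f : ℕ × V₂ → ℂ) : ℕ × V₂ → ℂ := fun v ↦
  lap (eC E₂) (mC V₂ m₂) (fun w ↦ I * aGC m₂ E₂ f w) v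
    - I * aGC m₂ E₂ (lap (eC E₂) (mC V₂ m₂) f) v

lemma I_mul_aGC (f : ℕ × V₂ → ℂ) (n : ℕ) (y : V₂) :
    I * aGC m₂ E₂ f (n, y) = iaHalf (fun k ↦ PleT m₂ E₂ f (k, y)) n := rfl

lemma lap2_I_mul_aGC (f : ℕ × V₂ → ℂ) (n : ℕ) :
    lap2 m₂ E₂ (fun y' ↦ I * aGC m₂ E₂ f (n, y')) = 0 := by
  have h := map_fiber_iaHalf (lap2ₗ m₂ E₂) (PleT m₂ E₂ f) n
  have h0 : ∀ k, lap2 m₂ E₂ (fun y' ↦ PleT m₂ E₂ f (k, y')) = 0 :=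
    fun k ↦ lap2_Ple m₂ E₂ (fun y' ↦ f (k, y'))
  simp only [coe_lap2ₗ, h0, Pi.zero_apply] at h
  exact h.trans (funext fun _ ↦ congrFun (map_zero iaHalf) n)

lemma PleT_lap_eC (hsym : ∀ y y', E₂ y y' = E₂ y' y) (f : ℕ × V₂ → ℂ) (k : ℕ) (y : V₂) :
    PleT m₂ E₂ (lap (eC E₂) (mC V₂ m₂) f) (k, y)
      = 1 / (m₂ : ℂ) * lapHalf (fun j ↦ PleT m₂ E₂ f (j, y)) k := by
  have h : (fun y' ↦ lap (eC E₂) (mC V₂ m₂) f (k, y'))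
      = (1 / (m₂ : ℂ)) • (fun y' ↦ lapHalf (fun j ↦ f (j, y')) k)
        + (1 / (m1C k : ℂ)) • lap2 m₂ E₂ (fun y' ↦ f (k, y')) := funext (lap_eC m₂ E₂ f k)
  simp only [PleT, h, ← coe_pleₗ, map_add, map_smul, map_fiber_lapHalf]
  simp [coe_pleₗ, Ple_lap2 m₂ E₂ hsym]

lemma cuspComm_apply (hsym : ∀ y y', E₂ y y' = E₂ y' y) (f : ℕ × V₂ → ℂ) (n : ℕ) (y : V₂) :
    cuspComm m₂ E₂ f (n, y) = 1 / (m₂ : ℂ) * commHalf (fun k ↦ PleT m₂ E₂ f (k, y)) n := by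
  have hPleT : (fun k ↦ PleT m₂ E₂ (lap (eC E₂) (mC V₂ m₂) f) (k, y))
      = (1 / (m₂ : ℂ)) • lapHalf (fun j ↦ PleT m₂ E₂ f (j, y)) :=
    funext (PleT_lap_eC m₂ E₂ hsym f · y)
  rw [cuspComm, lap_eC, lap2_I_mul_aGC, I_mul_aGC, hPleT, map_smul, commHalf_apply]
  simp only [Pi.zero_apply, mul_zero, add_zero, Pi.smul_apply, smul_eq_mul, mul_sub]
  rfl

end Commutator

section MainTerm

variable {V₂ : Type*} (m₂ : ℝ)

lemma Bop_apply (g : ℕ × V₂ → ℂ) (n : ℕ) (y : V₂) :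
    Bop m₂ g (n, y) = 1 / (m₂ : ℂ) * lapHalf (fun k ↦ g (k, y)) n := by
  rw [Bop, lap_e1C_m1C]

lemma mainTerm_eq_quadHalf (hm₂ : m₂ ≠ 0) (g : ℕ × V₂ → ℂ) (n : ℕ) (y : V₂) :
    ((m₂ : ℂ) / 2) * (Bop m₂ (fun w ↦ ((betaC / m₂ : ℝ) : ℂ) * g w - Bop m₂ g w) (n, y)
        - ((alphaC / m₂ : ℝ) : ℂ) * (((betaC / m₂ : ℝ) : ℂ) * g (n, y) - Bop m₂ g (n, y)))
      = 1 / (m₂ : ℂ) * quadHalf (fun k ↦ g (k, y)) n := by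
  have hinner : (fun k ↦ ((betaC / m₂ : ℝ) : ℂ) * g (k, y) - Bop m₂ g (k, y))
      = ((betaC / m₂ : ℝ) : ℂ) • (fun k ↦ g (k, y))
        - (1 / (m₂ : ℂ)) • lapHalf fun k ↦ g (k, y) := by
    ext k; simp [Bop_apply]
  rw [Bop_apply, hinner, Bop_apply, map_sub, map_smul, map_smul]
  simp only [quadHalf, LinearMap.smul_apply, LinearMap.sub_apply, LinearMap.comp_apply,
    LinearMap.id_apply, Pi.smul_apply, Pi.sub_apply, smul_eq_mul]
  have : (m₂ : ℂ) ≠ 0 := by exact_mod_cast hm₂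
  push_cast
  field_simp
  ring

end MainTerm

lemma finiteDimensional_of_support_subset {𝕜 α : Type*} [Field 𝕜] {s : Set α} (hs : s.Finite)
    (p : Submodule 𝕜 (α → 𝕜)) (hp : ∀ h ∈ p, Function.support h ⊆ s) : FiniteDimensional 𝕜 p := by
  have : Finite s := hs
  refine Module.Finite.of_injective (LinearMap.funLeft 𝕜 𝕜 ((↑) : s → α) ∘ₗ p.subtype) ?_
  intro h₁ h₂ heq
  refine Subtype.ext (funext fun x ↦ ?_)
  by_cases hx : x ∈ s
  · exact congrFun heq ⟨x, hx⟩
  · have h₁x := Function.notMem_support.mp fun h ↦ hx (hp _ h₁.2 h)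
    have h₂x := Function.notMem_support.mp fun h ↦ hx (hp _ h₂.2 h)
    rw [h₁x, h₂x]

section Defect

variable {V₂ : Type*} [Fintype V₂] (m₂ : ℝ) (E₂ : V₂ → V₂ → ℝ)

def pleTₗ : (ℕ × V₂ → ℂ) →ₗ[ℂ] (ℕ × V₂ → ℂ) :=
  LinearMap.pi fun v ↦ LinearMap.proj v.2 ∘ₗ pleₗ m₂ E₂ ∘ₗ LinearMap.funLeft ℂ ℂ (v.1, ·)

def cuspDefect : (ℕ × V₂ → ℂ) →ₗ[ℂ] (ℕ × V₂ → ℂ) :=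
  (1 / (m₂ : ℂ)) • LinearMap.pi fun v ↦
    LinearMap.proj v.1 ∘ₗ (commHalf - quadHalf) ∘ₗ LinearMap.funLeft ℂ ℂ (·, v.2) ∘ₗ pleTₗ m₂ E₂

lemma pleTₗ_apply (f : ℕ × V₂ → ℂ) : pleTₗ m₂ E₂ f = PleT m₂ E₂ f := rfl

lemma cuspDefect_apply (f : ℕ × V₂ → ℂ) (n : ℕ) (y : V₂) :
    cuspDefect m₂ E₂ f (n, y)
      = 1 / (m₂ : ℂ) * (commHalf (fun k ↦ PleT m₂ E₂ f (k, y)) n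
        - quadHalf (fun k ↦ PleT m₂ E₂ f (k, y)) n) := by
  simp [cuspDefect, pleTₗ_apply, LinearMap.funLeft, Function.comp_def]

lemma support_cuspDefect_subset (f : ℕ × V₂ → ℂ) :
    Function.support (cuspDefect m₂ E₂ f) ⊆ Set.Iic 1 ×ˢ Set.univ := by
  rintro ⟨n, y⟩ hv
  refine ⟨?_, trivial⟩
  by_contra hn
  obtain ⟨k, rfl⟩ : ∃ k, n = k + 2 := ⟨n - 2, by simp at hn; omega⟩
  exact hv (by rw [cuspDefect_apply, commHalf_add_two_eq_quadHalf, sub_self, mul_zero])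

lemma finiteDimensional_range_cuspDefect :
    FiniteDimensional ℂ (LinearMap.range (cuspDefect m₂ E₂)) :=
  finiteDimensional_of_support_subset ((Set.finite_Iic 1).prod Set.finite_univ) _ <| by
    rintro _ ⟨f, rfl⟩
    exact support_cuspDefect_subset m₂ E₂ f

end Defect

section Bound

variable {V₂ : Type*} [Fintype V₂] (m₂ : ℝ) (E₂ : V₂ → V₂ → ℝ)

lemma nrm_eq_sqrt_sum {V : Type*} (m : V → ℝ) (h : V → ℂ) (s : Finset V)
    (hs : ∀ v ∉ s, h v = 0) : nrm m h = Real.sqrt (∑ v ∈ s, m v * ‖h v‖ ^ 2) := by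
  rw [nrm, tsum_eq_sum fun v hv ↦ by simp [hs v hv]]

lemma sum_mC_mul_norm_sq_cuspComm_le_window (hm₂ : 0 < m₂) (hsym : ∀ y y', E₂ y y' = E₂ y' y)
    (f : ℕ × V₂ → ℂ) (n : ℕ) :
    ∑ y, mC V₂ m₂ (n, y) * ‖cuspComm m₂ E₂ f (n, y)‖ ^ 2
      ≤ 5 * Real.exp 2 / m₂ * (Real.exp (-n) *
          ∑ k ∈ Finset.Icc (n - 2) (n + 2), ∑ y, ‖f (k, y)‖ ^ 2) := by
  have hnorm : ∀ y, mC V₂ m₂ (n, y) * ‖cuspComm m₂ E₂ f (n, y)‖ ^ 2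
      = Real.exp (-n) / m₂ * ‖commHalf (fun k ↦ PleT m₂ E₂ f (k, y)) n‖ ^ 2 := fun y ↦ by
    rw [cuspComm_apply m₂ E₂ hsym, norm_mul, mul_pow, mC, m1C, norm_div, norm_one,
      Complex.norm_real, Real.norm_of_nonneg hm₂.le]
    field_simp
  calc ∑ y, mC V₂ m₂ (n, y) * ‖cuspComm m₂ E₂ f (n, y)‖ ^ 2
      ≤ ∑ y, Real.exp (-n) / m₂ * (5 * Real.exp 2 *
          ∑ k ∈ Finset.Icc (n - 2) (n + 2), ‖PleT m₂ E₂ f (k, y)‖ ^ 2) := by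
        simp only [hnorm]
        exact Finset.sum_le_sum fun y _ ↦
          mul_le_mul_of_nonneg_left (sq_norm_commHalf_le _ n) (by positivity)
    _ = 5 * Real.exp 2 / m₂ * (Real.exp (-n) *
          ∑ k ∈ Finset.Icc (n - 2) (n + 2), ∑ y, ‖PleT m₂ E₂ f (k, y)‖ ^ 2) := by
        simp_rw [Finset.mul_sum]
        rw [Finset.sum_comm]
        exact Finset.sum_congr rfl fun _ _ ↦ Finset.sum_congr rfl fun _ _ ↦ by ring
    _ ≤ _ := by
        have hPle : ∑ k ∈ Finset.Icc (n - 2) (n + 2), ∑ y, ‖PleT m₂ E₂ f (k, y)‖ ^ 2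
            ≤ ∑ k ∈ Finset.Icc (n - 2) (n + 2), ∑ y, ‖f (k, y)‖ ^ 2 :=
          Finset.sum_le_sum fun k _ ↦ sum_norm_sq_Ple_le m₂ E₂ (fun y' ↦ f (k, y'))
        gcongr

lemma sum_mC_mul_norm_sq_cuspComm_le (hm₂ : 0 < m₂) (hsym : ∀ y y', E₂ y y' = E₂ y' y)
    (f : ℕ × V₂ → ℂ) (R : ℕ) :
    ∑ v ∈ Finset.range R ×ˢ Finset.univ, mC V₂ m₂ v * ‖cuspComm m₂ E₂ f v‖ ^ 2
      ≤ (5 * Real.exp 2 / m₂) ^ 2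
        * ∑ v ∈ Finset.range (R + 2) ×ˢ Finset.univ, mC V₂ m₂ v * ‖f v‖ ^ 2 := by
  set W : ℕ → ℝ := fun k ↦ ∑ y, ‖f (k, y)‖ ^ 2
  have hf : ∑ v ∈ Finset.range (R + 2) ×ˢ Finset.univ, mC V₂ m₂ v * ‖f v‖ ^ 2
      = m₂ * ∑ k ∈ Finset.range (R + 2), Real.exp (-k) * W k := by
    simp only [Finset.sum_product, W, Finset.mul_sum, mC, m1C]
    exact Finset.sum_congr rfl fun _ _ ↦ Finset.sum_congr rfl fun _ _ ↦ by ring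
  rw [Finset.sum_product, hf]
  calc ∑ n ∈ Finset.range R, ∑ y, mC V₂ m₂ (n, y) * ‖cuspComm m₂ E₂ f (n, y)‖ ^ 2
      ≤ ∑ n ∈ Finset.range R, 5 * Real.exp 2 / m₂ *
          (Real.exp (-n) * ∑ k ∈ Finset.Icc (n - 2) (n + 2), W k) :=
        Finset.sum_le_sum fun n _ ↦ sum_mC_mul_norm_sq_cuspComm_le_window m₂ E₂ hm₂ hsym f n
    _ ≤ 5 * Real.exp 2 / m₂
          * (5 * Real.exp 2 * ∑ k ∈ Finset.range (R + 2), Real.exp (-k) * W k) := by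
        rw [← Finset.mul_sum]
        exact mul_le_mul_of_nonneg_left (sum_range_exp_neg_mul_sum_Icc_le W
          (fun _ ↦ Finset.sum_nonneg fun _ _ ↦ sq_nonneg _) R) (by positivity)
    _ = _ := by field_simp

lemma nrm_cuspComm_le (hm₂ : 0 < m₂) (hsym : ∀ y y', E₂ y y' = E₂ y' y) (f : ℕ × V₂ → ℂ)
    (hf : (Function.support f).Finite) :
    nrm (mC V₂ m₂) (cuspComm m₂ E₂ f) ≤ 5 * Real.exp 2 / m₂ * nrm (mC V₂ m₂) f := by
  obtain ⟨N, hN⟩ := (hf.image Prod.fst).bddAbove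
  have hfN : ∀ k y, N < k → f (k, y) = 0 := fun k y hk ↦ by
    by_contra h
    exact hk.not_ge (hN ⟨(k, y), h, rfl⟩)
  have hcomm : ∀ v ∉ Finset.range (N + 3) ×ˢ Finset.univ, cuspComm m₂ E₂ f v = 0 := by
    rintro ⟨n, y⟩ hv
    simp only [Finset.mem_product, Finset.mem_range, Finset.mem_univ, and_true, not_lt] at hv
    have hG : ∀ k ∈ Finset.Icc (n - 2) (n + 2), ‖PleT m₂ E₂ f (k, y)‖ = 0 := fun k hk ↦ by
      have : (fun y' ↦ f (k, y')) = 0 := funext fun y' ↦ hfN k y' (by simp at hk; omega)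
      simp [PleT, this, ← coe_pleₗ]
    have := norm_commHalf_le (fun k ↦ PleT m₂ E₂ f (k, y)) n
    rw [Finset.sum_eq_zero hG, mul_zero, norm_le_zero_iff] at this
    rw [cuspComm_apply m₂ E₂ hsym, this, mul_zero]
  have hf' : ∀ v ∉ Finset.range (N + 3 + 2) ×ˢ Finset.univ, f v = 0 := by
    rintro ⟨k, y⟩ hv
    simp only [Finset.mem_product, Finset.mem_range, Finset.mem_univ, and_true, not_lt] at hv
    exact hfN k y (by omega)
  rw [nrm_eq_sqrt_sum _ _ _ hcomm, nrm_eq_sqrt_sum _ _ _ hf',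
    ← Real.sqrt_sq (by positivity : 0 ≤ 5 * Real.exp 2 / m₂), ← Real.sqrt_mul (sq_nonneg _)]
  exact Real.sqrt_le_sqrt (sum_mC_mul_norm_sq_cuspComm_le m₂ E₂ hm₂ hsym f _)

end Bound

end Cusp

open Cusp in
theorem stmt13_general {V₂ : Type*} [Fintype V₂] (m₂ : ℝ) (hm₂ : 0 < m₂)
    (E₂ : V₂ → V₂ → ℝ) (hsym : ∀ y y', E₂ y y' = E₂ y' y) :
    (∃ K : (ℕ × V₂ → ℂ) →ₗ[ℂ] (ℕ × V₂ → ℂ),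
      FiniteDimensional ℂ (LinearMap.range K) ∧
      (∀ f : ℕ × V₂ → ℂ, (Function.support f).Finite →
        (Function.support (K f)).Finite) ∧
      ∀ f : ℕ × V₂ → ℂ, (Function.support f).Finite → ∀ v : ℕ × V₂,
        lap (eC E₂) (mC V₂ m₂) (fun w => I * aGC m₂ E₂ f w) v
            - I * aGC m₂ E₂ (lap (eC E₂) (mC V₂ m₂) f) v
          = ((m₂ : ℂ) / 2) *
              (Bop m₂ (fun w => ((betaC / m₂ : ℝ) : ℂ) * PleT m₂ E₂ f w
                  - Bop m₂ (PleT m₂ E₂ f) w) v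
                - ((alphaC / m₂ : ℝ) : ℂ) *
                  (((betaC / m₂ : ℝ) : ℂ) * PleT m₂ E₂ f v
                    - Bop m₂ (PleT m₂ E₂ f) v))
            + K f v) ∧
    (∃ C > 0, ∀ f : ℕ × V₂ → ℂ, (Function.support f).Finite →
      nrm (mC V₂ m₂) (fun v =>
          lap (eC E₂) (mC V₂ m₂) (fun w => I * aGC m₂ E₂ f w) v
            - I * aGC m₂ E₂ (lap (eC E₂) (mC V₂ m₂) f) v)
        ≤ C * nrm (mC V₂ m₂) f) := by
  refine ⟨⟨cuspDefect m₂ E₂, finiteDimensional_range_cuspDefect m₂ E₂, fun f _ ↦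
    ((Set.finite_Iic 1).prod Set.finite_univ).subset (support_cuspDefect_subset m₂ E₂ f), ?_⟩,
    ⟨5 * Real.exp 2 / m₂, by positivity, nrm_cuspComm_le m₂ E₂ hm₂ hsym⟩⟩
  rintro f - ⟨n, y⟩
  change cuspComm m₂ E₂ f (n, y) = _
  rw [cuspComm_apply m₂ E₂ hsym, mainTerm_eq_quadHalf m₂ hm₂.ne', cuspDefect_apply]
  ring

/-- **Commutator formula for the cusp:**
`[Δ_{G^c}, iA_{G^c}] = (m₂/2)(B − α/m₂)((β/m₂)Id − B)(1 ⊗ P^le) + K` with `K` of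
finite rank mapping finitely supported functions to finitely supported functions;
in particular the commutator extends to a bounded operator on `ℓ²(ℕ×V₂, m^c)`. -/
theorem stmt13 {V₂ : Type*} [Fintype V₂] (m₂ : ℝ) (hm₂ : 0 < m₂)
    (E₂ : V₂ → V₂ → ℝ) (hsym : ∀ y y', E₂ y y' = E₂ y' y)
    (hpos : ∀ y y', 0 ≤ E₂ y y') (hdiag : ∀ y, E₂ y y = 0) :
    (∃ K : (ℕ × V₂ → ℂ) →ₗ[ℂ] (ℕ × V₂ → ℂ),
      FiniteDimensional ℂ (LinearMap.range K) ∧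
      (∀ f : ℕ × V₂ → ℂ, (Function.support f).Finite →
        (Function.support (K f)).Finite) ∧
      ∀ f : ℕ × V₂ → ℂ, (Function.support f).Finite → ∀ v : ℕ × V₂,
        lap (eC E₂) (mC V₂ m₂) (fun w => I * aGC m₂ E₂ f w) v
            - I * aGC m₂ E₂ (lap (eC E₂) (mC V₂ m₂) f) v
          = ((m₂ : ℂ) / 2) *
              (Bop m₂ (fun w => ((betaC / m₂ : ℝ) : ℂ) * PleT m₂ E₂ f w
                  - Bop m₂ (PleT m₂ E₂ f) w) v
                - ((alphaC / m₂ : ℝ) : ℂ) *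
                  (((betaC / m₂ : ℝ) : ℂ) * PleT m₂ E₂ f v
                    - Bop m₂ (PleT m₂ E₂ f) v))
            + K f v) ∧
    (∃ C > 0, ∀ f : ℕ × V₂ → ℂ, (Function.support f).Finite →
      nrm (mC V₂ m₂) (fun v =>
          lap (eC E₂) (mC V₂ m₂) (fun w => I * aGC m₂ E₂ f w) v
            - I * aGC m₂ E₂ (lap (eC E₂) (mC V₂ m₂) f) v)
        ≤ C * nrm (mC V₂ m₂) f) :=
  stmt13_general m₂ hm₂ E₂ hsym
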